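/- arXiv:2201.11144 — 4 statements merged into one kernel-verified Lean document; each statement's English description precedes it below -/
import Mathlib

section
/- Let n ≥ 2. For 1 ≤ i < j ≤ n and φ ∈ ℝ, let r_{ij}(φ) ∈ SO(n) be the plane rotation matrix that agrees with the identity except that its (i,i) and (j,j) entries are cos φ, its (i,j) entry is −sin φ and its (j,i) entry is sin φ. Then every u ∈ SO(n) can be written as u = r_{n−1} r_{n−2} ⋯ r_2 r_1, where for each 1 ≤ j ≤ n−1 one has r_j = r_{1,2}(φ_{1,j}) r_{2,3}(φ_{2,j}) ⋯ r_{j,j+1}(φ_{j,j}) for some angles satisfying 0 ≤ φ_{i,j} ≤ π for 1 ≤ i < j and 0 ≤ φ_{j,j} < 2π. -/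
noncomputable def planeRot (n i j : ℕ) (φ : ℝ) : Matrix (Fin n) (Fin n) ℝ :=
  Matrix.of fun a b =>
    if (a : ℕ) = i ∧ (b : ℕ) = i then Real.cos φ
    else if (a : ℕ) = i ∧ (b : ℕ) = j then -Real.sin φ
    else if (a : ℕ) = j ∧ (b : ℕ) = i then Real.sin φ
    else if (a : ℕ) = j ∧ (b : ℕ) = j then Real.cos φ
    else if (a : ℕ) = (b : ℕ) then 1 else 0

namespace SOCoord
open Matrix

lemma sum_ite_two {n : ℕ} {p q : Fin n} (α β : ℝ) (g : Fin n → ℝ) :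
    ∑ c, ((if c = p then α else 0) + (if c = q then β else 0)) * g c = α * g p + β * g q := by
  simp [add_mul, Finset.sum_add_distrib, ite_mul]

variable {n i j : ℕ}

lemma planeRot_row_i (hi : i < n) (hj : j < n) (hij : i ≠ j) (φ : ℝ) (c : Fin n) :
    planeRot n i j φ ⟨i, hi⟩ c =
      (if c = (⟨i, hi⟩ : Fin n) then Real.cos φ else 0) +
      (if c = (⟨j, hj⟩ : Fin n) then -Real.sin φ else 0) := by
  by_cases hci : (c : ℕ) = i
  · have : c = ⟨i, hi⟩ := Fin.ext hci
    simp [planeRot, this, Fin.ext_iff, hij]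
  · by_cases hcj : (c : ℕ) = j
    · have : c = ⟨j, hj⟩ := Fin.ext hcj
      simp [planeRot, this, Fin.ext_iff, hij, Ne.symm hij]
    · simp [planeRot, Fin.ext_iff, hci, hcj, Ne.symm hci, Ne.symm hcj]

lemma planeRot_row_j (hi : i < n) (hj : j < n) (hij : i ≠ j) (φ : ℝ) (c : Fin n) :
    planeRot n i j φ ⟨j, hj⟩ c =
      (if c = (⟨i, hi⟩ : Fin n) then Real.sin φ else 0) +
      (if c = (⟨j, hj⟩ : Fin n) then Real.cos φ else 0) := by
  by_cases hci : (c : ℕ) = i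
  · have : c = ⟨i, hi⟩ := Fin.ext hci
    simp [planeRot, this, Fin.ext_iff, hij, Ne.symm hij]
  · by_cases hcj : (c : ℕ) = j
    · have : c = ⟨j, hj⟩ := Fin.ext hcj
      simp [planeRot, this, Fin.ext_iff, hij, Ne.symm hij]
    · simp [planeRot, Fin.ext_iff, hci, hcj, Ne.symm hci, Ne.symm hcj]

lemma planeRot_row_other {a : Fin n} (hai : (a : ℕ) ≠ i) (haj : (a : ℕ) ≠ j) (φ : ℝ) (c : Fin n) :
    planeRot n i j φ a c = if a = c then 1 else 0 := by
  simp [planeRot, hai, haj, Fin.ext_iff]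

lemma planeRot_mul_apply (hi : i < n) (hj : j < n) (hij : i ≠ j) (φ : ℝ)
    (M : Matrix (Fin n) (Fin n) ℝ) (a b : Fin n) :
    (planeRot n i j φ * M) a b =
      if (a : ℕ) = i then Real.cos φ * M ⟨i, hi⟩ b + (-Real.sin φ) * M ⟨j, hj⟩ b
      else if (a : ℕ) = j then Real.sin φ * M ⟨i, hi⟩ b + Real.cos φ * M ⟨j, hj⟩ b
      else M a b := by
  rw [Matrix.mul_apply]
  by_cases hai : (a : ℕ) = i
  · have ha : a = ⟨i, hi⟩ := Fin.ext hai
    subst ha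
    simp only [hai, if_pos]
    rw [show (fun c => planeRot n i j φ ⟨i, hi⟩ c * M c b) = fun c =>
      ((if c = (⟨i, hi⟩ : Fin n) then Real.cos φ else 0) +
       (if c = (⟨j, hj⟩ : Fin n) then -Real.sin φ else 0)) * M c b from
      funext fun c => by rw [planeRot_row_i hi hj hij]]
    rw [sum_ite_two]
  · by_cases haj : (a : ℕ) = j
    · have ha : a = ⟨j, hj⟩ := Fin.ext haj
      subst ha
      simp only [hai, haj, if_neg, if_pos, ite_false]
      rw [show (fun c => planeRot n i j φ ⟨j, hj⟩ c * M c b) = fun c =>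
        ((if c = (⟨i, hi⟩ : Fin n) then Real.sin φ else 0) +
         (if c = (⟨j, hj⟩ : Fin n) then Real.cos φ else 0)) * M c b from
        funext fun c => by rw [planeRot_row_j hi hj hij]]
      rw [sum_ite_two]
    · simp only [hai, haj, ite_false]
      rw [show (fun c => planeRot n i j φ a c * M c b) = fun c =>
        (if a = c then 1 else 0) * M c b from
        funext fun c => by rw [planeRot_row_other hai haj]]
      simp

lemma planeRot_mulVec_apply (hi : i < n) (hj : j < n) (hij : i ≠ j) (φ : ℝ)
    (v : Fin n → ℝ) (a : Fin n) :
    (planeRot n i j φ *ᵥ v) a =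
      if (a : ℕ) = i then Real.cos φ * v ⟨i, hi⟩ + (-Real.sin φ) * v ⟨j, hj⟩
      else if (a : ℕ) = j then Real.sin φ * v ⟨i, hi⟩ + Real.cos φ * v ⟨j, hj⟩
      else v a := by
  rw [Matrix.mulVec, dotProduct]
  by_cases hai : (a : ℕ) = i
  · have ha : a = ⟨i, hi⟩ := Fin.ext hai
    subst ha
    simp only [hai, if_pos]
    rw [show (fun c => planeRot n i j φ ⟨i, hi⟩ c * v c) = fun c =>
      ((if c = (⟨i, hi⟩ : Fin n) then Real.cos φ else 0) +
       (if c = (⟨j, hj⟩ : Fin n) then -Real.sin φ else 0)) * v c from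
      funext fun c => by rw [planeRot_row_i hi hj hij]]
    exact sum_ite_two _ _ _
  · by_cases haj : (a : ℕ) = j
    · have ha : a = ⟨j, hj⟩ := Fin.ext haj
      subst ha
      simp only [hai, haj, if_neg, if_pos, ite_false]
      rw [show (fun c => planeRot n i j φ ⟨j, hj⟩ c * v c) = fun c =>
        ((if c = (⟨i, hi⟩ : Fin n) then Real.sin φ else 0) +
         (if c = (⟨j, hj⟩ : Fin n) then Real.cos φ else 0)) * v c from
        funext fun c => by rw [planeRot_row_j hi hj hij]]
      exact sum_ite_two _ _ _
    · simp only [hai, haj, ite_false]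
      rw [show (fun c => planeRot n i j φ a c * v c) = fun c =>
        (if a = c then 1 else 0) * v c from
        funext fun c => by rw [planeRot_row_other hai haj]]
      simp

lemma planeRot_zero (hij : i ≠ j) : planeRot n i j 0 = 1 := by
  ext a b
  simp only [planeRot, Matrix.of_apply, Real.cos_zero, Real.sin_zero, neg_zero, Matrix.one_apply,
    Fin.ext_iff]
  split_ifs <;> simp_all <;> omega

set_option maxHeartbeats 1000000 in
lemma planeRot_transpose (hij : i ≠ j) (φ : ℝ) :
    (planeRot n i j φ)ᵀ = planeRot n i j (-φ) := by
  ext a b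
  simp only [Matrix.transpose_apply, planeRot, Matrix.of_apply, Real.cos_neg, Real.sin_neg,
    neg_neg]
  split_ifs <;> first
    | rfl
    | (exfalso; omega)

set_option maxHeartbeats 1000000 in
lemma planeRot_mul (hi : i < n) (hj : j < n) (hij : i ≠ j) (φ ψ : ℝ) :
    planeRot n i j φ * planeRot n i j ψ = planeRot n i j (φ + ψ) := by
  ext a b
  rw [planeRot_mul_apply hi hj hij]
  simp only [planeRot, Matrix.of_apply, true_and, hij, false_and, if_false,
    show ((⟨i, hi⟩ : Fin n) : ℕ) = i from rfl, show ((⟨j, hj⟩ : Fin n) : ℕ) = j from rfl,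
    show (j = i) = False from by simp [Ne.symm hij]]
  split_ifs <;> first
    | (exfalso; omega)
    | ring1
    | (simp only [Real.cos_add, Real.sin_add]; try ring1)

lemma planeRot_mul_neg (hi : i < n) (hj : j < n) (hij : i ≠ j) (φ : ℝ) :
    planeRot n i j φ * planeRot n i j (-φ) = 1 := by
  rw [planeRot_mul hi hj hij, add_neg_cancel, planeRot_zero hij]

lemma planeRot_transpose_mul (hi : i < n) (hj : j < n) (hij : i ≠ j) (φ : ℝ) :
    (planeRot n i j φ)ᵀ * planeRot n i j φ = 1 := by
  rw [planeRot_transpose hij, planeRot_mul hi hj hij, neg_add_cancel, planeRot_zero hij]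

lemma planeRot_mul_transpose (hi : i < n) (hj : j < n) (hij : i ≠ j) (φ : ℝ) :
    planeRot n i j φ * (planeRot n i j φ)ᵀ = 1 := by
  rw [planeRot_transpose hij, planeRot_mul_neg hi hj hij]

lemma planeRot_det (hi : i < n) (hj : j < n) (hij : i ≠ j) (φ : ℝ) :
    (planeRot n i j φ).det = 1 := by
  have h2 : planeRot n i j φ = planeRot n i j (φ/2) * planeRot n i j (φ/2) := by
    rw [planeRot_mul hi hj hij]; ring_nf
  calc (planeRot n i j φ).det
      = (planeRot n i j (φ/2)).det * (planeRot n i j (φ/2)).det := by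
        rw [h2, Matrix.det_mul]
    _ = (planeRot n i j (φ/2)).det * ((planeRot n i j (φ/2))ᵀ).det := by
        rw [Matrix.det_transpose]
    _ = (planeRot n i j (φ/2) * (planeRot n i j (φ/2))ᵀ).det := by rw [Matrix.det_mul]
    _ = 1 := by rw [planeRot_mul_transpose hi hj hij, Matrix.det_one]

def SuppOn (n m : ℕ) (M : Matrix (Fin n) (Fin n) ℝ) : Prop :=
  ∀ a b : Fin n, m ≤ (a : ℕ) ∨ m ≤ (b : ℕ) → M a b = if a = b then 1 else 0

lemma suppOn_one (m : ℕ) : SuppOn n m 1 := fun _ _ _ => Matrix.one_apply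

lemma suppOn_planeRot {m : ℕ} (him : i < m) (hjm : j < m) (φ : ℝ) :
    SuppOn n m (planeRot n i j φ) := by
  intro a b hab
  simp only [planeRot, Matrix.of_apply, Fin.ext_iff]
  rcases hab with h | h <;> split_ifs <;> simp_all <;> omega

lemma SuppOn.mul {m : ℕ} {A B : Matrix (Fin n) (Fin n) ℝ}
    (hA : SuppOn n m A) (hB : SuppOn n m B) : SuppOn n m (A * B) := by
  intro a b hab
  rw [Matrix.mul_apply]
  rcases hab with h | h
  · rw [Finset.sum_congr rfl fun c _ => by rw [hA a c (Or.inl h)]]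
    simp only [ite_mul, one_mul, zero_mul]
    rw [Finset.sum_ite_eq Finset.univ a fun c => B c b]
    simp only [Finset.mem_univ, if_true]
    exact hB a b (Or.inl h)
  · rw [Finset.sum_congr rfl fun c _ => by rw [hB c b (Or.inr h)]]
    simp only [mul_ite, mul_one, mul_zero]
    rw [Finset.sum_ite_eq' Finset.univ b fun c => A a c]
    simp only [Finset.mem_univ, if_true]
    exact hA a b (Or.inr h)

lemma suppOn_list_prod {m : ℕ} (L : List (Matrix (Fin n) (Fin n) ℝ))
    (h : ∀ M ∈ L, SuppOn n m M) : SuppOn n m L.prod := by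
  induction L with
  | nil => simpa using suppOn_one m
  | cons A L ih =>
    rw [List.prod_cons]
    exact (h A (by simp)).mul (ih fun M hM => h M (by simp [hM]))

lemma SuppOn.mulVec_single {m : ℕ} {M : Matrix (Fin n) (Fin n) ℝ} (h : SuppOn n m M)
    {k : Fin n} (hk : m ≤ (k : ℕ)) : M *ᵥ Pi.single k 1 = Pi.single k 1 := by
  funext a
  simp [Matrix.mulVec_single, Pi.single_apply, h a k (Or.inr hk)]

lemma prod_orth (L : List (Matrix (Fin n) (Fin n) ℝ))
    (h : ∀ M ∈ L, Mᵀ * M = 1 ∧ M * Mᵀ = 1) : L.prodᵀ * L.prod = 1 ∧ L.prod * L.prodᵀ = 1 := by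
  induction L with
  | nil => simp
  | cons A L ih =>
    obtain ⟨hA1, hA2⟩ := h A (by simp)
    obtain ⟨hL1, hL2⟩ := ih fun M hM => h M (by simp [hM])
    rw [List.prod_cons, Matrix.transpose_mul]
    constructor
    · calc L.prodᵀ * Aᵀ * (A * L.prod) = L.prodᵀ * (Aᵀ * A) * L.prod := by
            simp only [Matrix.mul_assoc]
        _ = 1 := by rw [hA1, Matrix.mul_one, hL1]
    · calc A * L.prod * (L.prodᵀ * Aᵀ) = A * (L.prod * L.prodᵀ) * Aᵀ := by
            simp only [Matrix.mul_assoc]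
        _ = 1 := by rw [hL2, Matrix.mul_one, hA2]

lemma prod_det (L : List (Matrix (Fin n) (Fin n) ℝ)) (h : ∀ M ∈ L, M.det = 1) :
    L.prod.det = 1 := by
  induction L with
  | nil => simp
  | cons A L ih =>
    rw [List.prod_cons, Matrix.det_mul, h A (by simp), one_mul]
    exact ih fun M hM => h M (by simp [hM])



noncomputable def rotProd (n j : ℕ) (θ : ℕ → ℝ) : Matrix (Fin n) (Fin n) ℝ :=
  ((List.range (j + 1)).map fun i => planeRot n i (i + 1) (θ i)).prod

lemma rotProd_zero (θ : ℕ → ℝ) : rotProd n 0 θ = planeRot n 0 1 (θ 0) := by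
  simp [rotProd, List.range_succ, List.range_zero]

lemma rotProd_succ (θ : ℕ → ℝ) (j : ℕ) :
    rotProd n (j + 1) θ = rotProd n j θ * planeRot n (j + 1) (j + 2) (θ (j + 1)) := by
  rw [rotProd, rotProd, List.range_succ, List.map_append, List.prod_append]
  simp

lemma rotProd_congr (j : ℕ) {θ θ' : ℕ → ℝ} (h : ∀ i ≤ j, θ i = θ' i) :
    rotProd n j θ = rotProd n j θ' := by
  unfold rotProd
  congr 1
  apply List.map_congr_left
  intro i hi
  rw [h i (by simpa using Nat.lt_succ_iff.mp (List.mem_range.mp hi))]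

lemma suppOn_rotProd {m : ℕ} (j : ℕ) (hjm : j + 1 < m) (θ : ℕ → ℝ) :
    SuppOn n m (rotProd n j θ) := by
  apply suppOn_list_prod
  intro M hM
  obtain ⟨i, hi, rfl⟩ := List.mem_map.mp hM
  have : i < j + 1 := List.mem_range.mp hi
  exact suppOn_planeRot (by omega) (by omega) _

lemma rotProd_orth (j : ℕ) (hj : j + 1 < n) (θ : ℕ → ℝ) :
    (rotProd n j θ)ᵀ * rotProd n j θ = 1 ∧ rotProd n j θ * (rotProd n j θ)ᵀ = 1 := by
  apply prod_orth
  intro M hM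
  obtain ⟨i, hi, rfl⟩ := List.mem_map.mp hM
  have : i < j + 1 := List.mem_range.mp hi
  exact ⟨planeRot_transpose_mul (by omega) (by omega) (by omega) _,
    planeRot_mul_transpose (by omega) (by omega) (by omega) _⟩

lemma rotProd_det (j : ℕ) (hj : j + 1 < n) (θ : ℕ → ℝ) : (rotProd n j θ).det = 1 := by
  apply prod_det
  intro M hM
  obtain ⟨i, hi, rfl⟩ := List.mem_map.mp hM
  have : i < j + 1 := List.mem_range.mp hi
  exact planeRot_det (by omega) (by omega) (by omega) _

/-- key peeling identity -/
lemma rotProd_succ_mulVec (j : ℕ) (hj : j + 2 < n) (θ : ℕ → ℝ) :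
    rotProd n (j + 1) θ *ᵥ Pi.single (⟨j + 2, hj⟩ : Fin n) (1 : ℝ)
      = (-Real.sin (θ (j + 1))) • (rotProd n j θ *ᵥ Pi.single (⟨j + 1, by omega⟩ : Fin n) (1 : ℝ))
        + Real.cos (θ (j + 1)) • (Pi.single (⟨j + 2, hj⟩ : Fin n) (1 : ℝ) : Fin n → ℝ) := by
  have hstep : planeRot n (j + 1) (j + 2) (θ (j + 1)) *ᵥ Pi.single (⟨j + 2, hj⟩ : Fin n) 1
      = (-Real.sin (θ (j + 1))) • (Pi.single (⟨j + 1, by omega⟩ : Fin n) (1 : ℝ) : Fin n → ℝ)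
        + Real.cos (θ (j + 1)) • (Pi.single (⟨j + 2, hj⟩ : Fin n) (1 : ℝ) : Fin n → ℝ) := by
    funext a
    rw [planeRot_mulVec_apply (by omega : j + 1 < n) hj (by omega)]
    simp only [Pi.add_apply, Pi.smul_apply, Pi.single_apply, smul_eq_mul, Fin.ext_iff]
    split_ifs <;> simp_all <;> ring
  rw [rotProd_succ, ← Matrix.mulVec_mulVec, hstep, Matrix.mulVec_add, Matrix.mulVec_smul,
    Matrix.mulVec_smul,
    (suppOn_rotProd (n := n) (m := j + 2) j (by omega) θ).mulVec_single (k := ⟨j + 2, hj⟩)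
      (by simp)]


lemma sum_sq_update {w : Fin n → ℝ} {k : Fin n} :
    ∑ a, (Function.update w k 0) a ^ 2 = (∑ a, w a ^ 2) - w k ^ 2 := by
  have h1 := Finset.add_sum_erase Finset.univ (fun a => (Function.update w k 0) a ^ 2)
    (Finset.mem_univ k)
  have h2 := Finset.add_sum_erase Finset.univ (fun a => w a ^ 2) (Finset.mem_univ k)
  have h3 : ∑ a ∈ Finset.univ.erase k, (Function.update w k 0) a ^ 2
      = ∑ a ∈ Finset.univ.erase k, w a ^ 2 := by
    apply Finset.sum_congr rfl
    intro a ha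
    rw [Function.update_of_ne (Finset.ne_of_mem_erase ha)]
  simp only [Function.update_self] at h1
  rw [← h2, ← h1, h3]
  ring

lemma circle (x y : ℝ) (h : x ^ 2 + y ^ 2 = 1) :
    ∃ θ, 0 ≤ θ ∧ θ < 2 * Real.pi ∧ Real.cos θ = y ∧ Real.sin θ = -x := by
  have hy1 : -1 ≤ y := by nlinarith
  have hy2 : y ≤ 1 := by nlinarith
  have hxy : 1 - y ^ 2 = x ^ 2 := by nlinarith
  by_cases hx : x ≤ 0
  · refine ⟨Real.arccos y, Real.arccos_nonneg y, ?_, Real.cos_arccos hy1 hy2, ?_⟩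
    · have := Real.arccos_le_pi y
      have := Real.pi_pos
      linarith
    · rw [Real.sin_arccos, hxy, Real.sqrt_sq_eq_abs, abs_of_nonpos hx]
  · push_neg at hx
    have hylt : y < 1 := by nlinarith
    refine ⟨2 * Real.pi - Real.arccos y, ?_, ?_, ?_, ?_⟩
    · have := Real.arccos_le_pi y
      have := Real.pi_pos
      linarith
    · have := Real.arccos_pos.mpr hylt
      linarith
    · rw [Real.cos_sub, Real.cos_two_pi, Real.sin_two_pi, Real.cos_arccos hy1 hy2]
      ring
    · rw [Real.sin_sub, Real.cos_two_pi, Real.sin_two_pi, Real.sin_arccos, hxy,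
        Real.sqrt_sq_eq_abs, abs_of_pos hx]
      ring

/-- Spherical coordinates, all angles in `[0, π]`, assuming a sign condition. -/
lemma sphere_coords_aux :
    ∀ (j : ℕ) (hj : j + 1 < n) (w : Fin n → ℝ), (∑ a, w a ^ 2 = 1) →
    (∀ a : Fin n, j + 1 < (a : ℕ) → w a = 0) →
    0 ≤ (-1 : ℝ) ^ (j + 1) * w ⟨0, by omega⟩ →
    ∃ θ : ℕ → ℝ, (∀ i, i ≤ j → 0 ≤ θ i ∧ θ i ≤ Real.pi) ∧
      w = rotProd n j θ *ᵥ Pi.single (⟨j + 1, hj⟩ : Fin n) (1 : ℝ) := by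
  intro j
  induction j with
  | zero =>
    intro hj w hw hsupp hsign
    have h0 : (0 : ℕ) < n := by omega
    have hs : w ⟨0, h0⟩ ^ 2 + w ⟨1, hj⟩ ^ 2 = 1 := by
      rw [← hw]
      symm
      rw [← Finset.sum_subset (Finset.subset_univ ({⟨0, h0⟩, ⟨1, hj⟩} : Finset (Fin n)))]
      · rw [Finset.sum_insert (by simp [Fin.ext_iff]), Finset.sum_singleton]
      · intro x _ hx
        simp only [Finset.mem_insert, Finset.mem_singleton, Fin.ext_iff] at hx
        push_neg at hx
        rw [hsupp x (by omega)]
        simp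
    have hsign' : w ⟨0, h0⟩ ≤ 0 := by
      rw [pow_one] at hsign
      nlinarith
    set θ0 := Real.arccos (w ⟨1, hj⟩) with hθ0
    have hcos : Real.cos θ0 = w ⟨1, hj⟩ := Real.cos_arccos (by nlinarith) (by nlinarith)
    have hsin : Real.sin θ0 = -w ⟨0, h0⟩ := by
      rw [hθ0, Real.sin_arccos, show 1 - w ⟨1, hj⟩ ^ 2 = (-w ⟨0, h0⟩) ^ 2 by nlinarith,
        Real.sqrt_sq (by linarith)]
    refine ⟨fun _ => θ0, fun i _ => ⟨Real.arccos_nonneg _, Real.arccos_le_pi _⟩, ?_⟩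
    funext a
    rw [rotProd_zero, planeRot_mulVec_apply (by omega : 0 < n) (by omega : 1 < n)
      (by omega : (0 : ℕ) ≠ 1)]
    by_cases ha0 : (a : ℕ) = 0
    · have ha : a = ⟨0, h0⟩ := Fin.ext ha0
      simp only [ha0, if_pos, ha]
      rw [show (Pi.single (⟨0 + 1, hj⟩ : Fin n) (1 : ℝ) : Fin n → ℝ) ⟨0, by omega⟩ = 0 from
          by simp [Pi.single_apply, Fin.ext_iff],
        show (Pi.single (⟨0 + 1, hj⟩ : Fin n) (1 : ℝ) : Fin n → ℝ) ⟨1, by omega⟩ = 1 from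
          by simp [Pi.single_apply, Fin.ext_iff]]
      rw [hsin]
      ring
    · by_cases ha1 : (a : ℕ) = 1
      · have ha : a = ⟨1, hj⟩ := Fin.ext ha1
        rw [if_neg ha0, if_pos ha1, ha]
        rw [show (Pi.single (⟨0 + 1, hj⟩ : Fin n) (1 : ℝ) : Fin n → ℝ) ⟨0, by omega⟩ = 0 from
            by simp [Pi.single_apply, Fin.ext_iff],
          show (Pi.single (⟨0 + 1, hj⟩ : Fin n) (1 : ℝ) : Fin n → ℝ) ⟨1, by omega⟩ = 1 from
            by simp [Pi.single_apply, Fin.ext_iff]]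
        rw [hcos]
        ring
      · simp only [ha0, ha1, ite_false]
        rw [hsupp a (by omega), Pi.single_apply]
        rw [if_neg (by simp [Fin.ext_iff]; omega)]
  | succ j ih =>
    intro hj w hw hsupp hsign
    set k1 : Fin n := ⟨j + 2, hj⟩ with hk1
    set c := w k1 with hc
    set t := Function.update w k1 0 with ht
    have hsum_t : ∑ a, t a ^ 2 = 1 - c ^ 2 := by rw [ht, sum_sq_update, hw]
    have hc2 : c ^ 2 ≤ 1 := by
      have := Finset.single_le_sum (f := fun a => w a ^ 2) (fun a _ => sq_nonneg _)
        (Finset.mem_univ k1)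
      rw [hw] at this
      exact this
    have hρnn : (0 : ℝ) ≤ 1 - c ^ 2 := by nlinarith
    set ρ := Real.sqrt (1 - c ^ 2) with hρdef
    have hρ2 : ρ ^ 2 = 1 - c ^ 2 := Real.sq_sqrt hρnn
    have hcos : Real.cos (Real.arccos c) = c := Real.cos_arccos (by nlinarith) (by nlinarith)
    have hsin : Real.sin (Real.arccos c) = ρ := Real.sin_arccos c
    by_cases hρ : ρ = 0
    · -- degenerate case : w = c • e_{k1}
      have h1c : 1 - c ^ 2 = 0 := by rw [← hρ2, hρ]; ring
      have ht0 : ∀ a, t a = 0 := by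
        intro a
        have hz : ∑ a, t a ^ 2 = 0 := by rw [hsum_t, h1c]
        have := (Finset.sum_eq_zero_iff_of_nonneg (fun a _ => sq_nonneg (t a))).mp hz a
          (Finset.mem_univ a)
        exact pow_eq_zero_iff (by norm_num) |>.mp this
      refine ⟨fun i => if i = j + 1 then Real.arccos c else 0, ?_, ?_⟩
      · intro i _
        by_cases hi : i = j + 1 <;>
          simp [hi, Real.arccos_nonneg, Real.arccos_le_pi, Real.pi_nonneg]
      · rw [rotProd_succ_mulVec j hj]
        simp only [↓reduceIte]
        rw [hsin, hρ]
        funext a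
        simp only [Pi.add_apply, Pi.smul_apply, smul_eq_mul, neg_zero, zero_mul, zero_add]
        rw [hcos]
        by_cases hak : a = k1
        · rw [hak, Pi.single_apply, if_pos rfl, mul_one]
        · rw [Pi.single_apply, if_neg hak, mul_zero]
          have := ht0 a
          rwa [ht, Function.update_of_ne hak] at this
    · have hρpos : 0 < ρ := lt_of_le_of_ne (Real.sqrt_nonneg _) (Ne.symm hρ)
      set w'' : Fin n → ℝ := fun a => -(t a) / ρ with hw''def
      have hsum'' : ∑ a, w'' a ^ 2 = 1 := by
        have h1 : ∑ a, w'' a ^ 2 = (∑ a, t a ^ 2) / ρ ^ 2 := by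
          rw [Finset.sum_div]
          exact Finset.sum_congr rfl fun a _ => by rw [hw''def, div_pow, neg_sq]
        rw [h1, hsum_t, hρ2, div_self (by nlinarith)]
      have hsupp'' : ∀ a : Fin n, j + 1 < (a : ℕ) → w'' a = 0 := by
        intro a ha
        by_cases hak : a = k1
        · rw [hw''def, hak, ht]
          simp
        · have hav : (a : ℕ) ≠ j + 2 := fun h => hak (Fin.ext h)
          rw [hw''def]
          simp only
          rw [ht, Function.update_of_ne hak, hsupp a (by omega)]
          simp
      have h0k : (⟨0, by omega⟩ : Fin n) ≠ k1 := by simp [Fin.ext_iff, hk1]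
      have hsign'' : 0 ≤ (-1 : ℝ) ^ (j + 1) * w'' ⟨0, by omega⟩ := by
        have ht00 : t ⟨0, by omega⟩ = w ⟨0, by omega⟩ := by
          rw [ht, Function.update_of_ne h0k]
        have heq : (-1 : ℝ) ^ (j + 1) * w'' ⟨0, by omega⟩
            = ((-1 : ℝ) ^ (j + 2) * w ⟨0, by omega⟩) / ρ := by
          show (-1 : ℝ) ^ (j + 1) * (-(t ⟨0, by omega⟩) / ρ) = _
          rw [ht00, pow_succ]
          ring
        rw [heq]
        exact div_nonneg hsign hρpos.le
      obtain ⟨θ, hθbound, hθeq⟩ := ih (by omega) w'' hsum'' hsupp'' hsign''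
      refine ⟨fun i => if i = j + 1 then Real.arccos c else θ i, ?_, ?_⟩
      · intro i hi
        by_cases hij1 : i = j + 1
        · simp [hij1, Real.arccos_nonneg, Real.arccos_le_pi]
        · simp only [hij1, if_neg, ite_false]
          exact hθbound i (by omega)
      · rw [rotProd_succ_mulVec j hj]
        simp only [↓reduceIte]
        rw [rotProd_congr j (fun i hi => show
            (if i = j + 1 then Real.arccos c else θ i) = θ i from if_neg (by omega)),
          ← hθeq, hsin, hcos]
        funext a
        simp only [Pi.add_apply, Pi.smul_apply, smul_eq_mul]
        by_cases hak : a = k1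
        · rw [hak, Pi.single_apply, if_pos rfl, mul_one, hw''def]
          simp only
          rw [ht, Function.update_self]
          simp [hc]
        · rw [Pi.single_apply, if_neg hak, mul_zero, add_zero,
            hw''def]
          simp only
          rw [ht, Function.update_of_ne hak]
          field_simp

/-- Full spherical coordinates: last angle in `[0, 2π)`. -/
lemma sphere_coords (j : ℕ) (hj : j + 1 < n) (w : Fin n → ℝ) (hw : ∑ a, w a ^ 2 = 1)
    (hsupp : ∀ a : Fin n, j + 1 < (a : ℕ) → w a = 0) :
    ∃ θ : ℕ → ℝ, (∀ i, i < j → 0 ≤ θ i ∧ θ i ≤ Real.pi) ∧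
      (0 ≤ θ j ∧ θ j < 2 * Real.pi) ∧
      w = rotProd n j θ *ᵥ Pi.single (⟨j + 1, hj⟩ : Fin n) (1 : ℝ) := by
  cases j with
  | zero =>
    have h0 : (0 : ℕ) < n := by omega
    have hs : w ⟨0, h0⟩ ^ 2 + w ⟨1, hj⟩ ^ 2 = 1 := by
      rw [← hw]
      symm
      rw [← Finset.sum_subset (Finset.subset_univ ({⟨0, h0⟩, ⟨1, hj⟩} : Finset (Fin n)))]
      · rw [Finset.sum_insert (by simp [Fin.ext_iff]), Finset.sum_singleton]
      · intro x _ hx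
        simp only [Finset.mem_insert, Finset.mem_singleton, Fin.ext_iff] at hx
        push_neg at hx
        rw [hsupp x (by omega)]
        simp
    obtain ⟨θ0, hθ1, hθ2, hcos, hsin⟩ := circle (w ⟨0, h0⟩) (w ⟨1, hj⟩) hs
    refine ⟨fun _ => θ0, fun i hi => absurd hi (by omega), ⟨hθ1, hθ2⟩, ?_⟩
    funext a
    rw [rotProd_zero, planeRot_mulVec_apply (by omega : 0 < n) (by omega : 1 < n)
      (by omega : (0 : ℕ) ≠ 1)]
    by_cases ha0 : (a : ℕ) = 0
    · have ha : a = ⟨0, h0⟩ := Fin.ext ha0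
      rw [if_pos ha0, ha]
      rw [show (Pi.single (⟨0 + 1, hj⟩ : Fin n) (1 : ℝ) : Fin n → ℝ) ⟨0, by omega⟩ = 0 from
          by simp [Pi.single_apply, Fin.ext_iff],
        show (Pi.single (⟨0 + 1, hj⟩ : Fin n) (1 : ℝ) : Fin n → ℝ) ⟨1, by omega⟩ = 1 from
          by simp [Pi.single_apply, Fin.ext_iff]]
      rw [hsin]
      ring
    · by_cases ha1 : (a : ℕ) = 1
      · have ha : a = ⟨1, hj⟩ := Fin.ext ha1
        rw [if_neg ha0, if_pos ha1, ha]
        rw [show (Pi.single (⟨0 + 1, hj⟩ : Fin n) (1 : ℝ) : Fin n → ℝ) ⟨0, by omega⟩ = 0 from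
            by simp [Pi.single_apply, Fin.ext_iff],
          show (Pi.single (⟨0 + 1, hj⟩ : Fin n) (1 : ℝ) : Fin n → ℝ) ⟨1, by omega⟩ = 1 from
            by simp [Pi.single_apply, Fin.ext_iff]]
        rw [hcos]
        ring
      · rw [if_neg ha0, if_neg ha1]
        rw [hsupp a (by omega), Pi.single_apply]
        rw [if_neg (by simp [Fin.ext_iff]; omega)]
  | succ j =>
    set k1 : Fin n := ⟨j + 2, hj⟩ with hk1
    set c := w k1 with hc
    set t := Function.update w k1 0 with ht
    have hsum_t : ∑ a, t a ^ 2 = 1 - c ^ 2 := by rw [ht, sum_sq_update, hw]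
    have hc2 : c ^ 2 ≤ 1 := by
      have := Finset.single_le_sum (f := fun a => w a ^ 2) (fun a _ => sq_nonneg _)
        (Finset.mem_univ k1)
      rw [hw] at this
      exact this
    have hρnn : (0 : ℝ) ≤ 1 - c ^ 2 := by nlinarith
    set ρ := Real.sqrt (1 - c ^ 2) with hρdef
    have hρ2 : ρ ^ 2 = 1 - c ^ 2 := Real.sq_sqrt hρnn
    have hcos : Real.cos (Real.arccos c) = c := Real.cos_arccos (by nlinarith) (by nlinarith)
    have hsin : Real.sin (Real.arccos c) = ρ := Real.sin_arccos c
    have hpi := Real.pi_pos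
    by_cases hρ : ρ = 0
    · -- degenerate case : w = c • e_{k1}
      have h1c : 1 - c ^ 2 = 0 := by rw [← hρ2, hρ]; ring
      have ht0 : ∀ a, t a = 0 := by
        intro a
        have hz : ∑ a, t a ^ 2 = 0 := by rw [hsum_t, h1c]
        have := (Finset.sum_eq_zero_iff_of_nonneg (fun a _ => sq_nonneg (t a))).mp hz a
          (Finset.mem_univ a)
        exact pow_eq_zero_iff (by norm_num) |>.mp this
      refine ⟨fun i => if i = j + 1 then Real.arccos c else 0, ?_, ?_, ?_⟩
      · intro i hi
        beta_reduce
        rw [if_neg (by omega)]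
        exact ⟨le_refl 0, Real.pi_nonneg⟩
      · beta_reduce
        rw [if_pos rfl]
        refine ⟨Real.arccos_nonneg _, ?_⟩
        have := Real.arccos_le_pi c
        linarith
      · rw [rotProd_succ_mulVec j hj]
        simp only [↓reduceIte]
        rw [hsin, hρ]
        funext a
        simp only [Pi.add_apply, Pi.smul_apply, smul_eq_mul, neg_zero, zero_mul, zero_add]
        rw [hcos]
        by_cases hak : a = k1
        · rw [hak, Pi.single_apply, if_pos rfl, mul_one]
        · rw [Pi.single_apply, if_neg hak, mul_zero]
          have := ht0 a
          rwa [ht, Function.update_of_ne hak] at this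
    · have hρpos : 0 < ρ := lt_of_le_of_ne (Real.sqrt_nonneg _) (Ne.symm hρ)
      have h1cpos : 0 < 1 - c ^ 2 := by rw [← hρ2]; positivity
      have hclt1 : c < 1 := by nlinarith
      have h0n : (0 : ℕ) < n := by omega
      have h0k : (⟨0, h0n⟩ : Fin n) ≠ k1 := by simp [Fin.ext_iff, hk1]
      have ht00 : t ⟨0, h0n⟩ = w ⟨0, h0n⟩ := by rw [ht, Function.update_of_ne h0k]
      by_cases hsgn : 0 ≤ (-1 : ℝ) ^ (j + 2) * w ⟨0, h0n⟩
      · -- top angle in [0, π]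
        set w'' : Fin n → ℝ := fun a => -(t a) / ρ with hw''def
        have hsum'' : ∑ a, w'' a ^ 2 = 1 := by
          have h1 : ∑ a, w'' a ^ 2 = (∑ a, t a ^ 2) / ρ ^ 2 := by
            rw [Finset.sum_div]
            exact Finset.sum_congr rfl fun a _ => by rw [hw''def, div_pow, neg_sq]
          rw [h1, hsum_t, hρ2, div_self (by nlinarith)]
        have hsupp'' : ∀ a : Fin n, j + 1 < (a : ℕ) → w'' a = 0 := by
          intro a ha
          by_cases hak : a = k1
          · rw [hw''def, hak, ht]
            simp
          · have hav : (a : ℕ) ≠ j + 2 := fun h => hak (Fin.ext h)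
            rw [hw''def]
            simp only
            rw [ht, Function.update_of_ne hak, hsupp a (by omega)]
            simp
        have hsign'' : 0 ≤ (-1 : ℝ) ^ (j + 1) * w'' ⟨0, by omega⟩ := by
          have heq : (-1 : ℝ) ^ (j + 1) * w'' ⟨0, by omega⟩
              = ((-1 : ℝ) ^ (j + 2) * w ⟨0, h0n⟩) / ρ := by
            show (-1 : ℝ) ^ (j + 1) * (-(t ⟨0, h0n⟩) / ρ) = _
            rw [ht00, pow_succ]
            ring
          rw [heq]
          exact div_nonneg hsgn hρpos.le
        obtain ⟨θ, hθbound, hθeq⟩ := sphere_coords_aux j (by omega) w'' hsum'' hsupp'' hsign''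
        refine ⟨fun i => if i = j + 1 then Real.arccos c else θ i, ?_, ?_, ?_⟩
        · intro i hi
          beta_reduce
          rw [if_neg (by omega)]
          exact hθbound i (by omega)
        · beta_reduce
          rw [if_pos rfl]
          refine ⟨Real.arccos_nonneg _, ?_⟩
          have := Real.arccos_le_pi c
          linarith
        · rw [rotProd_succ_mulVec j hj]
          simp only [↓reduceIte]
          rw [rotProd_congr j (fun i hi => show
              (if i = j + 1 then Real.arccos c else θ i) = θ i from if_neg (by omega)),
            ← hθeq, hsin, hcos]
          funext a
          simp only [Pi.add_apply, Pi.smul_apply, smul_eq_mul]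
          by_cases hak : a = k1
          · rw [hak, Pi.single_apply, if_pos rfl, mul_one, hw''def]
            simp only
            rw [ht, Function.update_self]
            simp [hc]
          · rw [Pi.single_apply, if_neg hak, mul_zero, add_zero, hw''def]
            simp only
            rw [ht, Function.update_of_ne hak]
            field_simp
      · -- top angle in (π, 2π)
        push_neg at hsgn
        set θtop := 2 * Real.pi - Real.arccos c with hθtop
        have hcos' : Real.cos θtop = c := by
          rw [hθtop, Real.cos_sub, Real.cos_two_pi, Real.sin_two_pi, hcos]
          ring
        have hsin' : Real.sin θtop = -ρ := by
          rw [hθtop, Real.sin_sub, Real.cos_two_pi, Real.sin_two_pi, hsin]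
          ring
        set w'' : Fin n → ℝ := fun a => t a / ρ with hw''def
        have hsum'' : ∑ a, w'' a ^ 2 = 1 := by
          have h1 : ∑ a, w'' a ^ 2 = (∑ a, t a ^ 2) / ρ ^ 2 := by
            rw [Finset.sum_div]
            exact Finset.sum_congr rfl fun a _ => by rw [hw''def, div_pow]
          rw [h1, hsum_t, hρ2, div_self (by nlinarith)]
        have hsupp'' : ∀ a : Fin n, j + 1 < (a : ℕ) → w'' a = 0 := by
          intro a ha
          by_cases hak : a = k1
          · rw [hw''def, hak, ht]
            simp
          · have hav : (a : ℕ) ≠ j + 2 := fun h => hak (Fin.ext h)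
            rw [hw''def]
            simp only
            rw [ht, Function.update_of_ne hak, hsupp a (by omega)]
            simp
        have hsign'' : 0 ≤ (-1 : ℝ) ^ (j + 1) * w'' ⟨0, by omega⟩ := by
          have heq : (-1 : ℝ) ^ (j + 1) * w'' ⟨0, by omega⟩
              = -(((-1 : ℝ) ^ (j + 2) * w ⟨0, h0n⟩) / ρ) := by
            show (-1 : ℝ) ^ (j + 1) * (t ⟨0, h0n⟩ / ρ) = _
            rw [ht00, pow_succ]
            ring
          rw [heq]
          have : ((-1 : ℝ) ^ (j + 2) * w ⟨0, h0n⟩) / ρ ≤ 0 :=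
            div_nonpos_of_nonpos_of_nonneg hsgn.le hρpos.le
          linarith
        obtain ⟨θ, hθbound, hθeq⟩ := sphere_coords_aux j (by omega) w'' hsum'' hsupp'' hsign''
        refine ⟨fun i => if i = j + 1 then θtop else θ i, ?_, ?_, ?_⟩
        · intro i hi
          beta_reduce
          rw [if_neg (by omega)]
          exact hθbound i (by omega)
        · beta_reduce
          rw [if_pos rfl]
          constructor
          · have := Real.arccos_le_pi c
            rw [hθtop]
            linarith
          · have := Real.arccos_pos.mpr hclt1
            rw [hθtop]
            linarith
        · rw [rotProd_succ_mulVec j hj]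
          simp only [↓reduceIte]
          rw [rotProd_congr j (fun i hi => show
              (if i = j + 1 then θtop else θ i) = θ i from if_neg (by omega)),
            ← hθeq, hsin', hcos']
          funext a
          simp only [Pi.add_apply, Pi.smul_apply, smul_eq_mul]
          by_cases hak : a = k1
          · rw [hak, Pi.single_apply, if_pos rfl, mul_one, hw''def]
            simp only
            rw [ht, Function.update_self]
            simp [hc]
          · rw [Pi.single_apply, if_neg hak, mul_zero, add_zero, hw''def]
            simp only
            rw [ht, Function.update_of_ne hak]
            field_simp


lemma SuppOn.transpose {m : ℕ} {M : Matrix (Fin n) (Fin n) ℝ} (h : SuppOn n m M) :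
    SuppOn n m Mᵀ := by
  intro a b hab
  rw [Matrix.transpose_apply, h b a (Or.symm hab)]
  simp [eq_comm]


lemma sq_sum_one {x : Fin n → ℝ} (hx : ∑ c, x c ^ 2 = 1) {k : Fin n} (hk : x k = 1) :
    ∀ b, b ≠ k → x b = 0 := by
  intro b hb
  have h1 : x k ^ 2 + ∑ c ∈ Finset.univ.erase k, x c ^ 2 = ∑ c, x c ^ 2 :=
    Finset.add_sum_erase Finset.univ (fun c => x c ^ 2) (Finset.mem_univ k)
  rw [hx, hk] at h1
  have h2 : ∑ c ∈ Finset.univ.erase k, x c ^ 2 = 0 := by nlinarith [h1]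
  have := (Finset.sum_eq_zero_iff_of_nonneg (fun c _ => sq_nonneg (x c))).mp h2 b
    (Finset.mem_erase.mpr ⟨hb, Finset.mem_univ b⟩)
  exact pow_eq_zero_iff (by norm_num) |>.mp this

lemma main_aux (n : ℕ) : ∀ m : ℕ, m ≤ n → ∀ u : Matrix (Fin n) (Fin n) ℝ,
    uᵀ * u = 1 → u.det = 1 → SuppOn n m u →
    ∃ φ : ℕ → ℕ → ℝ,
      (∀ i j : ℕ, i < j → j < m - 1 → 0 ≤ φ i j ∧ φ i j ≤ Real.pi) ∧
      (∀ j : ℕ, j < m - 1 → 0 ≤ φ j j ∧ φ j j < 2 * Real.pi) ∧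
      u = (((List.range (m - 1)).reverse).map fun j =>
            ((List.range (j + 1)).map fun i => planeRot n i (i + 1) (φ i j)).prod).prod := by
  intro m
  induction m with
  | zero =>
    intro _ u _ _ hsupp
    refine ⟨fun _ _ => 0, by omega, by omega, ?_⟩
    simp only [Nat.zero_sub, List.range_zero, List.reverse_nil, List.map_nil, List.prod_nil]
    ext a b
    rw [hsupp a b (Or.inl (Nat.zero_le _)), Matrix.one_apply]
  | succ m ih =>
    intro hmn u hu hdet hsupp
    cases m with
    | zero =>
      have h0 : (0 : ℕ) < n := by omega
      set d : Fin n → ℝ := fun a => if a = ⟨0, h0⟩ then u ⟨0, h0⟩ ⟨0, h0⟩ else 1 with hd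
      have hudiag : u = Matrix.diagonal d := by
        ext a b
        by_cases hab : a = b
        · subst hab
          rw [Matrix.diagonal_apply_eq]
          by_cases ha : a = ⟨0, h0⟩
          · rw [hd]
            simp only [ha, if_pos]
          · have : 1 ≤ (a : ℕ) := by
              rcases Nat.eq_zero_or_pos (a : ℕ) with h | h
              · exact absurd (Fin.ext h) ha
              · omega
            rw [hsupp a a (Or.inl this), hd]
            simp [ha]
        · rw [Matrix.diagonal_apply_ne _ hab]
          have : 1 ≤ (a : ℕ) ∨ 1 ≤ (b : ℕ) := by
            by_contra h
            push_neg at h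
            exact hab (Fin.ext (by omega))
          rw [hsupp a b this, if_neg hab]
      have hdet' : u.det = u ⟨0, h0⟩ ⟨0, h0⟩ := by
        rw [hudiag, Matrix.det_diagonal]
        rw [Finset.prod_eq_single (⟨0, h0⟩ : Fin n)
          (fun b _ hb => by rw [hd]; simp [hb]) (fun h => absurd (Finset.mem_univ _) h)]
        rw [hd]
        simp
      have hu00 : u ⟨0, h0⟩ ⟨0, h0⟩ = 1 := by rw [← hdet', hdet]
      have hu1 : u = 1 := by
        rw [hudiag, show d = fun _ => 1 from funext fun a => by
          show (if a = ⟨0, h0⟩ then u ⟨0, h0⟩ ⟨0, h0⟩ else 1) = 1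
          split_ifs <;> simp [hu00], Matrix.diagonal_one]
      refine ⟨fun _ _ => 0, by omega, by omega, ?_⟩
      simpa using hu1
    | succ m' =>
      have hkn : m' + 1 < n := by omega
      set k : Fin n := ⟨m' + 1, hkn⟩ with hk
      set w : Fin n → ℝ := fun a => u a k with hwdef
      have hw : ∑ a, w a ^ 2 = 1 := by
        have h1 : (uᵀ * u) k k = 1 := by rw [hu, Matrix.one_apply_eq]
        rw [Matrix.mul_apply] at h1
        rw [← h1]
        exact Finset.sum_congr rfl fun a _ => by
          rw [Matrix.transpose_apply, hwdef, sq]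
      have hwsupp : ∀ a : Fin n, m' + 1 < (a : ℕ) → w a = 0 := by
        intro a ha
        rw [hwdef]
        simp only
        rw [hsupp a k (Or.inl (by omega)), if_neg (fun h => by
          rw [h, hk] at ha; simp at ha)]
      obtain ⟨θ, hθ1, hθ2, hθeq⟩ := sphere_coords m' hkn w hw hwsupp
      set r := rotProd n m' θ with hr
      obtain ⟨hr1, hr2⟩ := rotProd_orth m' hkn θ
      set u' := rᵀ * u with hu'def
      have hfact : u = r * u' := by
        rw [hu'def, ← Matrix.mul_assoc, hr2, Matrix.one_mul]
      have hu'orth : u'ᵀ * u' = 1 := by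
        rw [hu'def, Matrix.transpose_mul, Matrix.transpose_transpose]
        calc uᵀ * r * (rᵀ * u) = uᵀ * (r * (rᵀ * u)) := by rw [Matrix.mul_assoc]
          _ = uᵀ * u := by rw [← Matrix.mul_assoc r, hr2, Matrix.one_mul]
          _ = 1 := hu
      have hu'det : u'.det = 1 := by
        rw [hu'def, Matrix.det_mul, Matrix.det_transpose, rotProd_det m' hkn, hdet, one_mul]
      have hcolvec : u' *ᵥ Pi.single k (1 : ℝ) = Pi.single k 1 := by
        rw [hu'def, ← Matrix.mulVec_mulVec]
        have husingle : u *ᵥ Pi.single k (1 : ℝ) = w := by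
          funext a
          rw [Matrix.mulVec_single, hwdef]
          simp
        rw [husingle, hθeq, Matrix.mulVec_mulVec, hr1, Matrix.one_mulVec]
      have hcol : ∀ a, u' a k = if a = k then 1 else 0 := by
        intro a
        have h1 := congrFun hcolvec a
        rw [Matrix.mulVec_single] at h1
        simpa [Pi.single_apply] using h1
      have hu'u'T : u' * u'ᵀ = 1 := mul_eq_one_comm.mp hu'orth
      have hrowsum : ∑ c, u' k c ^ 2 = 1 := by
        have h1 : (u' * u'ᵀ) k k = 1 := by rw [hu'u'T, Matrix.one_apply_eq]
        rw [Matrix.mul_apply] at h1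
        rw [← h1]
        exact Finset.sum_congr rfl fun c _ => by rw [Matrix.transpose_apply, sq]
      have hkk : u' k k = 1 := by
        have := hcol k
        rwa [if_pos rfl] at this
      have hrow : ∀ b : Fin n, b ≠ k → u' k b = 0 := sq_sum_one hrowsum hkk
      have hS2 : SuppOn n (m' + 1 + 1) u' :=
        SuppOn.mul (SuppOn.transpose (suppOn_rotProd m' (by omega) θ)) hsupp
      have hsupp' : SuppOn n (m' + 1) u' := by
        intro a b hab
        by_cases ha2 : m' + 1 + 1 ≤ (a : ℕ)
        · exact hS2 a b (Or.inl ha2)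
        · by_cases hb2 : m' + 1 + 1 ≤ (b : ℕ)
          · exact hS2 a b (Or.inr hb2)
          · rcases hab with ha | hb
            · have hak : a = k := Fin.ext (by rw [hk]; simp; omega)
              rw [hak]
              rcases eq_or_ne b k with rfl | hbk
              · rw [if_pos rfl, hkk]
              · rw [hrow b hbk, if_neg (fun h => hbk h.symm)]
            · have hbk : b = k := Fin.ext (by rw [hk]; simp; omega)
              rw [hbk, hcol a]
      obtain ⟨φ', hb1, hb2, heq'⟩ := ih (by omega) u' hu'orth hu'det hsupp'
      refine ⟨fun i jj => if jj = m' then θ i else φ' i jj, ?_, ?_, ?_⟩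
      · intro i jj hij hjj
        by_cases h : jj = m'
        · subst h
          beta_reduce
          rw [if_pos rfl]
          exact hθ1 i (by omega)
        · beta_reduce
          rw [if_neg h]
          exact hb1 i jj hij (by omega)
      · intro jj hjj
        by_cases h : jj = m'
        · subst h
          beta_reduce
          rw [if_pos rfl]
          exact hθ2
        · beta_reduce
          rw [if_neg h]
          exact hb2 jj (by omega)
      · have hrange : (List.range (m' + 1 + 1 - 1)).reverse = m' :: (List.range m').reverse := by
          rw [show m' + 1 + 1 - 1 = m' + 1 from by omega, List.range_succ, List.reverse_append]
          simp
        rw [hrange, List.map_cons, List.prod_cons]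
        have hhead : ((List.range (m' + 1)).map fun i =>
            planeRot n i (i + 1) (if m' = m' then θ i else φ' i m')).prod = r := by
          rw [hr]
          simp only [↓reduceIte]
          rfl
        have htail : ((List.range m').reverse.map fun jj => ((List.range (jj + 1)).map fun i =>
              planeRot n i (i + 1) (if jj = m' then θ i else φ' i jj)).prod)
            = ((List.range m').reverse.map fun jj => ((List.range (jj + 1)).map fun i =>
              planeRot n i (i + 1) (φ' i jj)).prod) := by
          apply List.map_congr_left
          intro jj hjj
          have hlt : jj < m' := List.mem_range.mp (List.mem_reverse.mp hjj)
          simp only [if_neg (Nat.ne_of_lt hlt)]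
        rw [show m' + 1 - 1 = m' from rfl] at heq'
        beta_reduce
        rw [hhead, htail, ← heq']
        exact hfact

end SOCoord

/-- Hurwitz-type global coordinates on `SO(n)` (0-based indices: the plane rotations
`r_{i,i+1}` for `0 ≤ i ≤ n-2` correspond to the 1-based `r_{i+1,i+2}`): every
`u ∈ SO(n)` can be written as `u = r_{n-2} ⋯ r_1 r_0`, where
`r_j = planeRot 0 1 (φ 0 j) * planeRot 1 2 (φ 1 j) * ⋯ * planeRot j (j+1) (φ j j)`,
with `0 ≤ φ i j ≤ π` for `i < j` and `0 ≤ φ j j < 2π`. -/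
theorem so_n_global_coordinates (n : ℕ) (hn : 2 ≤ n)
    (u : Matrix (Fin n) (Fin n) ℝ) (hu : u.transpose * u = 1) (hdet : u.det = 1) :
    ∃ φ : ℕ → ℕ → ℝ,
      (∀ i j : ℕ, i < j → j < n - 1 → 0 ≤ φ i j ∧ φ i j ≤ Real.pi) ∧
      (∀ j : ℕ, j < n - 1 → 0 ≤ φ j j ∧ φ j j < 2 * Real.pi) ∧
      u = (((List.range (n - 1)).reverse).map fun j =>
            ((List.range (j + 1)).map fun i => planeRot n i (i + 1) (φ i j)).prod).prod := by
  exact SOCoord.main_aux n n le_rfl u hu hdet (fun a b h => by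
    rcases h with h | h
    · exact absurd a.isLt (by omega)
    · exact absurd b.isLt (by omega))
end

section
/- Let G be a finite group and let V be an irreducible finite-dimensional complex representation of G. Then the dimension of V divides the order of G. -/
/-!
Let `χ` be the character of `ρ` and `z = ∑ g, χ(g⁻¹) g` in `ℂ[G]`. Since `χ` is a class function,
`z` is central, so by Schur's lemma it acts on `V` as a scalar `μ`. Taking traces and using the
orthonormality of `χ` gives `μ · dim V = |G|`. The values of `χ` are sums of roots of unity, hence
algebraic integers, so `z` lies in a subring of `ℂ[G]` that is finitely generated over the
algebraic integers; thus `z`, and with it `μ = |G| / dim V`, is an algebraic integer. A rational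
algebraic integer is an integer.
-/

open Module MonoidAlgebra Polynomial

theorem Nat.dvd_of_isIntegral_of_mul_eq {K : Type*} [Field K] [CharZero K] {μ : K} {m n : ℕ}
    (hμ : IsIntegral ℤ μ) (h : μ * n = m) : n ∣ m := by
  rcases eq_or_ne n 0 with rfl | hn
  · have : (m : K) = 0 := by simpa using h.symm
    simp_all
  have hμq : μ = algebraMap ℚ K (m / n) := by
    rw [map_div₀, map_natCast, map_natCast, eq_div_iff (by exact_mod_cast hn), h]
  rw [hμq, isIntegral_algebraMap_iff (algebraMap ℚ K).injective] at hμ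
  obtain ⟨y, hy⟩ := IsIntegrallyClosed.isIntegral_iff.mp hμ
  have : (m : ℤ) = n * y := by
    have : (m : ℚ) = n * y := by
      rw [show (y : ℚ) = algebraMap ℤ ℚ y from rfl, hy]
      field_simp
    exact_mod_cast this
  exact Int.natCast_dvd_natCast.mp ⟨y, this⟩

theorem Module.End.isIntegral_trace_of_pow_eq_one {K V : Type*} [Field K] [IsAlgClosed K]
    [AddCommGroup V] [Module K V] [FiniteDimensional K V] {f : End K V} {n : ℕ} (hn : 0 < n)
    (hf : f ^ n = 1) : IsIntegral ℤ (LinearMap.trace K V f) := by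
  rw [End.trace_eq_sum_roots_charpoly_of_splits (IsAlgClosed.splits _)]
  refine IsIntegral.multiset_sum fun μ hμ => IsIntegral.of_pow hn ?_
  obtain ⟨x, hx⟩ := ((End.hasEigenvalue_iff_isRoot_charpoly f μ).mpr
    (isRoot_of_mem_roots hμ)).exists_hasEigenvector
  have : μ ^ n • x = x := by
    simpa [hf] using (End.aeval_apply_of_hasEigenvector hx (p := X ^ n)).symm
  rw [smul_left_injective K hx.2 (this.trans (one_smul K x).symm)]
  exact isIntegral_one

theorem MonoidAlgebra.sum_single_mem_center {k G : Type*} [CommSemiring k] [Group G] [Fintype G]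
    {f : G → k} (hf : ∀ g h, f (h * g * h⁻¹) = f g) :
    ∑ g, single g (f g) ∈ Submonoid.center k[G] := by
  rw [Submonoid.mem_center_iff]
  intro x
  induction x using MonoidAlgebra.induction_linear with
  | zero => simp
  | add x y hx hy => rw [add_mul, mul_add, hx, hy]
  | single h c =>
    simp only [Finset.mul_sum, Finset.sum_mul, single_mul_single]
    refine Fintype.sum_equiv (MulAut.conj h).toEquiv _ _ fun g => ?_
    simp only [MulEquiv.toEquiv_eq_coe, MulEquiv.coe_toEquiv, MulAut.conj_apply,
      inv_mul_cancel_right, hf, mul_comm c]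

theorem MonoidAlgebra.isIntegral_sum_single {R A G : Type*} [CommRing R] [CommRing A]
    [Algebra R A] [Monoid G] [Fintype G] {f : G → A} (hf : ∀ g, IsIntegral R (f g)) :
    IsIntegral R (∑ g, single g (f g)) := by
  let O := integralClosure R A
  have hlift : mapAlgHom G (IsScalarTower.toAlgHom O O A) (∑ g, single g ⟨f g, hf g⟩)
      = ∑ g, single g (f g) := by
    simp [map_sum]
  rw [← hlift]
  exact isIntegral_trans _ ((IsIntegral.of_finite O _).map _)

namespace Representation

variable {k G V : Type*} [Field k] [AddCommGroup V] [Module k V]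

theorem isIrreducible_of_forall_submodule [Monoid G] [Nontrivial V] (ρ : Representation k G V)
    (h : ∀ p : Submodule k V, (∀ g : G, ∀ v ∈ p, ρ g v ∈ p) → p = ⊥ ∨ p = ⊤) :
    IsIrreducible ρ where
  exists_pair_ne := ⟨⊥, ⊤, fun h => bot_ne_top congr(($h).toSubmodule)⟩
  eq_bot_or_eq_top σ := by
    rcases h σ.toSubmodule fun g _ hv => σ.apply_mem_toSubmodule g hv with hσ | hσ
    · exact .inl (Subrepresentation.toSubmodule_injective hσ)
    · exact .inr (Subrepresentation.toSubmodule_injective hσ)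

theorem IsIrreducible.exists_asAlgebraHom_eq_algebraMap [Monoid G] [IsAlgClosed k]
    [FiniteDimensional k V] (ρ : Representation k G V) [IsIrreducible ρ] {z : k[G]}
    (hz : z ∈ Submonoid.center k[G]) : ∃ μ : k, ρ.asAlgebraHom z = algebraMap k _ μ := by
  obtain ⟨μ, hμ⟩ := algebraMap_intertwiningMap_bijective_of_isAlgClosed.2
    (IntertwiningMap.centralAlgebraMul ρ hz)
  refine ⟨μ, ?_⟩
  ext v
  simpa [Algebra.algebraMap_eq_smul_one] using congr($hμ.symm v)

theorem isIntegral_character [Group G] [Finite G] [IsAlgClosed k] [FiniteDimensional k V]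
    (ρ : Representation k G V) (g : G) : IsIntegral ℤ (ρ.character g) :=
  End.isIntegral_trace_of_pow_eq_one Nat.card_pos (by rw [← map_pow, pow_card_eq_one', map_one])

theorem IsIrreducible.sum_character_inv_mul_character [Group G] [Fintype G] [IsAlgClosed k]
    [NeZero (Nat.card G : k)] [FiniteDimensional k V] (ρ : Representation k G V)
    [IsIrreducible ρ] : ∑ g, ρ.character g⁻¹ * ρ.character g = Nat.card G := by
  have : Invertible (Nat.card G : k) := invertibleOfNonzero (NeZero.ne _)
  have h := card_inv_mul_sum_char_mul_char_eq_finrank ρ ρ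
  rw [IsIrreducible.finrank_intertwiningMap_self, Nat.cast_one,
    inv_mul_eq_one₀ (NeZero.ne _)] at h
  simpa only [mul_comm] using h.symm

end Representation

/-- The dimension of an irreducible finite-dimensional complex representation of a
finite group divides the order of the group. -/
theorem finrank_dvd_card_of_irreducible
    (G : Type*) [Group G] [Fintype G]
    (V : Type*) [AddCommGroup V] [Module ℂ V] [FiniteDimensional ℂ V] [Nontrivial V]
    (ρ : Representation ℂ G V)
    (hirr : ∀ p : Submodule ℂ V, (∀ g : G, ∀ v ∈ p, ρ g v ∈ p) → p = ⊥ ∨ p = ⊤) :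
    Module.finrank ℂ V ∣ Fintype.card G := by
  have := ρ.isIrreducible_of_forall_submodule hirr
  set χ := ρ.character
  set z : ℂ[G] := ∑ g, single g (χ g⁻¹)
  have hz_center : z ∈ Submonoid.center ℂ[G] :=
    sum_single_mem_center fun g h => by
      simp only [χ, mul_inv_rev, inv_inv, ← mul_assoc, Representation.char_conj]
  obtain ⟨μ, hμ⟩ := Representation.IsIrreducible.exists_asAlgebraHom_eq_algebraMap ρ hz_center
  have hμ_int : IsIntegral ℤ μ := by
    have hz : IsIntegral ℤ z := isIntegral_sum_single fun g => ρ.isIntegral_character g⁻¹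
    rw [← isIntegral_algebraMap_iff (algebraMap ℂ (End ℂ V)).injective, ← hμ]
    exact hz.map ρ.asAlgebraHom.toRingHom.toIntAlgHom
  have hμ_trace : μ * finrank ℂ V = Fintype.card G := by
    have htrace := congr(LinearMap.trace ℂ V $hμ)
    simp only [z, map_sum, Representation.asAlgebraHom_single, map_smul, smul_eq_mul,
      Algebra.algebraMap_eq_smul_one, LinearMap.trace_one] at htrace
    rw [← Nat.card_eq_fintype_card,
      ← Representation.IsIrreducible.sum_character_inv_mul_character ρ]
    exact htrace.symm
  exact Nat.dvd_of_isIntegral_of_mul_eq hμ_int hμ_trace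
end

section
/- Let G be a finite group of order h and let χ be the character of an irreducible finite-dimensional complex representation of G, with f = χ(1). Then for all A, B ∈ G one has h · χ(A) · χ(B) = f · Σ_{R ∈ G} χ(A R⁻¹ B R). -/
/-- Frobenius' character equation: if `χ` is the character of an irreducible
finite-dimensional complex representation of a finite group `G` of order `h`,
and `f = χ(1)`, then `h · χ(A) · χ(B) = f · Σ_{R ∈ G} χ(A R⁻¹ B R)`. -/
theorem character_equation
    (G : Type*) [Group G] [Fintype G]
    (V : Type*) [AddCommGroup V] [Module ℂ V] [FiniteDimensional ℂ V] [Nontrivial V]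
    (ρ : Representation ℂ G V)
    (hirr : ∀ p : Submodule ℂ V, (∀ g : G, ∀ v ∈ p, ρ g v ∈ p) → p = ⊥ ∨ p = ⊤)
    (χ : G → ℂ) (hχ : ∀ g : G, χ g = LinearMap.trace ℂ V (ρ g))
    (A B : G) :
    (Fintype.card G : ℂ) * χ A * χ B = χ 1 * ∑ R : G, χ (A * R⁻¹ * B * R) := by
  set T : Module.End ℂ V := ∑ R : G, ρ (R⁻¹ * B * R) with hT
  -- T commutes with every ρ g
  have hcomm : ∀ g : G, ρ g * T = T * ρ g := by
    intro g
    rw [hT, Finset.mul_sum, Finset.sum_mul]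
    refine Fintype.sum_equiv (Equiv.mulRight g⁻¹) _ _ ?_
    intro R
    simp only [Equiv.coe_mulRight]
    rw [← map_mul, ← map_mul]
    congr 1
    group
  -- T has an eigenvalue μ
  obtain ⟨μ, hμ⟩ := Module.End.exists_eigenvalue T
  obtain ⟨v, hv, hv0⟩ := hμ.exists_hasEigenvector
  -- kernel of T - μ is invariant hence ⊤, so T = μ • 1
  have hTμ : T = μ • (1 : Module.End ℂ V) := by
    have hker : LinearMap.ker (T - μ • (1 : Module.End ℂ V)) = ⊤ := by
      have hinv : ∀ g : G, ∀ w ∈ LinearMap.ker (T - μ • (1 : Module.End ℂ V)),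
          ρ g w ∈ LinearMap.ker (T - μ • (1 : Module.End ℂ V)) := by
        intro g w hw
        simp only [LinearMap.mem_ker, LinearMap.sub_apply, LinearMap.smul_apply,
          Module.End.one_apply] at hw ⊢
        have hcw := congrArg (fun f : Module.End ℂ V => f w) (hcomm g)
        simp only [Module.End.mul_apply] at hcw
        rw [← hcw]
        rw [sub_eq_zero] at hw
        rw [hw, map_smul, sub_self]
      rcases hirr _ hinv with h | h
      · exfalso
        apply hv0
        have hTv : T v = μ • v := Module.End.mem_genEigenspace_one.mp hv
        have hmem : v ∈ LinearMap.ker (T - μ • (1 : Module.End ℂ V)) := by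
          simp [LinearMap.mem_ker, hTv, sub_eq_zero]
        rw [h] at hmem
        simpa using hmem
      · exact h
    have h0 := LinearMap.ker_eq_top.mp hker
    rwa [sub_eq_zero] at h0
  -- trace of conjugates
  have htrconj : ∀ R : G, LinearMap.trace ℂ V (ρ (R⁻¹ * B * R)) = χ B := by
    intro R
    have : (R⁻¹ : G) * B * R = R⁻¹ * (B * R) := by group
    rw [this, map_mul, LinearMap.trace_mul_comm, ← map_mul, hχ B]
    congr 1
    group
  -- trace T = card G * χ B
  have htrT : LinearMap.trace ℂ V T = (Fintype.card G : ℂ) * χ B := by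
    rw [hT, map_sum]
    simp only [htrconj]
    simp [Finset.sum_const, Finset.card_univ, mul_comm]
  -- trace T = μ * χ 1
  have hχ1 : χ 1 = (Module.finrank ℂ V : ℂ) := by
    rw [hχ, map_one]
    simp [LinearMap.trace_one]
  have htrT' : LinearMap.trace ℂ V T = μ * χ 1 := by
    rw [hTμ, map_smul, hχ1]
    simp [LinearMap.trace_one, smul_eq_mul]
  -- the sum on the RHS
  have hsum : ∑ R : G, χ (A * R⁻¹ * B * R) = μ * χ A := by
    have : ∑ R : G, χ (A * R⁻¹ * B * R)
        = LinearMap.trace ℂ V (ρ A * T) := by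
      rw [hT, Finset.mul_sum, map_sum]
      refine Finset.sum_congr rfl fun R _ => ?_
      rw [hχ, ← map_mul]
      congr 2
      group
    rw [this, hTμ, hχ A]
    rw [mul_smul_comm, map_smul]
    simp [smul_eq_mul]
  rw [hsum]
  have key : (Fintype.card G : ℂ) * χ B = μ * χ 1 := by rw [← htrT, htrT']
  calc (Fintype.card G : ℂ) * χ A * χ B = ((Fintype.card G : ℂ) * χ B) * χ A := by ring
    _ = μ * χ 1 * χ A := by rw [key]
    _ = χ 1 * (μ * χ A) := by ring
end

section
/- Every topological group that is Hausdorff, locally compact, metrizable and separable admits a nonzero right-invariant regular Borel measure that is finite on compact sets and positive on nonempty open sets; likewise it admits such a left-invariant measure (existence of Haar measure, Haar's theorem). -/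
open MeasureTheory

theorem haar_existence_metrizable_separable_general
    (G : Type*) [Group G] [TopologicalSpace G] [IsTopologicalGroup G]
    [LocallyCompactSpace G]
    [MeasurableSpace G] [BorelSpace G] :
    (∃ μ : Measure G, μ ≠ 0 ∧ μ.IsMulRightInvariant ∧ μ.Regular ∧
      IsFiniteMeasureOnCompacts μ ∧ μ.IsOpenPosMeasure) ∧
    (∃ μ : Measure G, μ ≠ 0 ∧ μ.IsMulLeftInvariant ∧ μ.Regular ∧
      IsFiniteMeasureOnCompacts μ ∧ μ.IsOpenPosMeasure) :=
  ⟨⟨Measure.haar.inv, NeZero.ne _, inferInstance, inferInstance, inferInstance, inferInstance⟩,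
    ⟨Measure.haar, NeZero.ne _, inferInstance, inferInstance, inferInstance, inferInstance⟩⟩

/-- Haar's theorem: every Hausdorff, locally compact, metrizable and separable
topological group admits a nonzero right-invariant regular Borel measure, finite on
compact sets and positive on nonempty open sets; likewise a left-invariant one. -/
theorem haar_existence_metrizable_separable
    (G : Type*) [Group G] [TopologicalSpace G] [IsTopologicalGroup G]
    [T2Space G] [LocallyCompactSpace G]
    [TopologicalSpace.MetrizableSpace G] [TopologicalSpace.SeparableSpace G]
    [MeasurableSpace G] [BorelSpace G] :
    (∃ μ : Measure G, μ ≠ 0 ∧ μ.IsMulRightInvariant ∧ μ.Regular ∧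
      IsFiniteMeasureOnCompacts μ ∧ μ.IsOpenPosMeasure) ∧
    (∃ μ : Measure G, μ ≠ 0 ∧ μ.IsMulLeftInvariant ∧ μ.Regular ∧
      IsFiniteMeasureOnCompacts μ ∧ μ.IsOpenPosMeasure) :=
  haar_existence_metrizable_separable_general G
end
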